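/- Let d ≥ 2 and let M be a commuting-operator measurement on ℂ^d with r outcomes and all diagonal entries m_j⁽ⁱ⁾ > 0. Then for every pair of indices k ≠ l: γ(M) ≥ Σᵢ (m_k⁽ⁱ⁾ − m_l⁽ⁱ⁾)² / (2(m_k⁽ⁱ⁾ + m_l⁽ⁱ⁾)), and Σᵢ (m_k⁽ⁱ⁾ − m_l⁽ⁱ⁾)² / (2(m_k⁽ⁱ⁾ + m_l⁽ⁱ⁾)) ≥ 1 − Σᵢ √(m_k⁽ⁱ⁾·m_l⁽ⁱ⁾). In particular, γ(M) ≥ 1 − min over k ≠ l of Σᵢ √(m_k⁽ⁱ⁾·m_l⁽ⁱ⁾). -/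

import Mathlib

open scoped Matrix Kronecker ComplexOrder
open Classical

noncomputable section

/-- A density matrix: positive semidefinite with unit trace. -/
def IsDensityMatrix {n : Type*} [Fintype n] (ρ : Matrix n n ℂ) : Prop :=
  ρ.PosSemidef ∧ ρ.trace = 1

/-- A POVM with `r` outcomes. -/
def IsPOVM {n : Type*} [Fintype n] [DecidableEq n] {r : ℕ}
    (M : Fin r → Matrix n n ℂ) : Prop :=
  (∀ i, (M i).PosSemidef) ∧ ∑ i, M i = 1

/-- The Fisher information of the measurement-outcome distribution. -/
def FisherInfo {n : Type*} [Fintype n] {r : ℕ}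
    (ρ ρ' : Matrix n n ℂ) (M : Fin r → Matrix n n ℂ) : ℝ :=
  ∑ i, if (ρ * M i).trace = 0 then 0
    else ((ρ' * M i).trace.re) ^ 2 / ((ρ * M i).trace.re)

/-- A quantum channel (CPTP map) given by finitely many Kraus operators. -/
def IsQuantumChannel {m n : Type*} [Fintype m] [Fintype n] [DecidableEq m]
    (E : Matrix m m ℂ → Matrix n n ℂ) : Prop :=
  ∃ (κ : ℕ) (K : Fin κ → Matrix n m ℂ),
    (∑ j, (K j)ᴴ * K j = 1) ∧ ∀ σ, E σ = ∑ j, K j * σ * (K j)ᴴ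

/-- Quantum preprocessing-optimized Fisher information. -/
def QPFI {m n : Type*} [Fintype m] [Fintype n] [DecidableEq m] {r : ℕ}
    (ρ ρ' : Matrix m m ℂ) (M : Fin r → Matrix n n ℂ) : ℝ :=
  sSup {x : ℝ | ∃ E : Matrix m m ℂ → Matrix n n ℂ,
    IsQuantumChannel E ∧ x = FisherInfo (E ρ) (E ρ') M}

/-- Quantum unitary-preprocessing-optimized Fisher information. -/
def QUPFI {n : Type*} [Fintype n] [DecidableEq n] {r : ℕ}
    (ρ ρ' : Matrix n n ℂ) (M : Fin r → Matrix n n ℂ) : ℝ :=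
  sSup {x : ℝ | ∃ U : Matrix n n ℂ, U ∈ Matrix.unitaryGroup n ℂ ∧
    x = FisherInfo (U * ρ * Uᴴ) (U * ρ' * Uᴴ) M}

/-- Complex inner product, conjugate-linear in the first argument. -/
def cInner {n : Type*} [Fintype n] (φ ψ : n → ℂ) : ℂ := ∑ k, star (φ k) * ψ k

/-- The functional whose supremum over orthonormal pairs is the normalized QPFI. -/
def gammaSummand {n : Type*} [Fintype n] {r : ℕ}
    (M : Fin r → Matrix n n ℂ) (φ φp : n → ℂ) : ℝ :=
  ∑ i, if cInner φ (M i *ᵥ φ) = 0 then 0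
    else ((cInner φ (M i *ᵥ φp)).re) ^ 2 / ((cInner φ (M i *ᵥ φ)).re)

/-- The normalized QPFI of a POVM. -/
def gammaPOVM {n : Type*} [Fintype n] {r : ℕ} (M : Fin r → Matrix n n ℂ) : ℝ :=
  sSup {x : ℝ | ∃ φ φp : n → ℂ,
    cInner φ φ = 1 ∧ cInner φp φp = 1 ∧ cInner φ φp = 0 ∧ x = gammaSummand M φ φp}

/-- Quantum Fisher information: the Fisher information optimized over all POVMs. -/
def QFI {m : Type*} [Fintype m] [DecidableEq m] (ρ ρ' : Matrix m m ℂ) : ℝ :=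
  sSup {x : ℝ | ∃ (κ : ℕ) (T : Fin κ → Matrix m m ℂ), IsPOVM T ∧ x = FisherInfo ρ ρ' T}

/-- Classical Fisher information of a finite probability distribution. -/
def classFisher {r : ℕ} (p p' : Fin r → ℝ) : ℝ :=
  ∑ i, if p i = 0 then 0 else (p' i) ^ 2 / p i

lemma cInner_diag {d : ℕ} (w : Fin d → ℝ) (φ ψ : Fin d → ℂ) :
    cInner φ ((Matrix.diagonal fun j => ((w j : ℝ) : ℂ)) *ᵥ ψ)
      = ∑ j, ((w j : ℝ) : ℂ) * (star (φ j) * ψ j) := by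
  unfold cInner
  refine Finset.sum_congr rfl fun j _ => ?_
  rw [Matrix.mulVec_diagonal]; ring

lemma sum_two {d : ℕ} {k l : Fin d} (hkl : k ≠ l) (f : Fin d → ℝ)
    (hf : ∀ j, j ≠ k → j ≠ l → f j = 0) : ∑ j, f j = f k + f l := by
  rw [← Finset.sum_pair hkl]
  exact (Finset.sum_subset (Finset.subset_univ _) (fun j _ hj => by
    simp only [Finset.mem_insert, Finset.mem_singleton, not_or] at hj
    exact hf j hj.1 hj.2)).symm

/-- For the diagonal POVM, the gamma summand is bounded by 1. -/
lemma gammaSummand_le_one {d r : ℕ} (m : Fin r → Fin d → ℝ) (hpos : ∀ i j, 0 < m i j)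
    (hsum : ∀ j, ∑ i, m i j = 1)
    (M : Fin r → Matrix (Fin d) (Fin d) ℂ)
    (hMdef : ∀ i, M i = Matrix.diagonal fun j => ((m i j : ℝ) : ℂ))
    (φ φp : Fin d → ℂ) (hφp : cInner φp φp = 1) :
    gammaSummand M φ φp ≤ 1 := by
  set A : Fin r → ℝ := fun i => ∑ j, m i j * Complex.normSq (φ j) with hAdef
  set B : Fin r → ℝ := fun i => ∑ j, m i j * Complex.normSq (φp j) with hBdef
  have hstar : ∀ z : ℂ, star z * z = ((Complex.normSq z : ℝ) : ℂ) := by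
    intro z
    rw [Complex.star_def, mul_comm, Complex.mul_conj]
  have hA : ∀ i, cInner φ (M i *ᵥ φ) = ((A i : ℝ) : ℂ) := by
    intro i
    rw [hMdef i, cInner_diag]
    simp only [hstar]
    norm_cast
  have hBnn : ∀ i, 0 ≤ B i := fun i =>
    Finset.sum_nonneg fun j _ => mul_nonneg (hpos i j).le (Complex.normSq_nonneg _)
  have hAnn : ∀ i, 0 ≤ A i := fun i =>
    Finset.sum_nonneg fun j _ => mul_nonneg (hpos i j).le (Complex.normSq_nonneg _)
  have hBsum : ∑ i, B i = 1 := by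
    have h1 : ∑ i, B i = ∑ j, Complex.normSq (φp j) := by
      rw [hBdef]
      rw [Finset.sum_comm]
      refine Finset.sum_congr rfl fun j _ => ?_
      rw [← Finset.sum_mul, hsum j, one_mul]
    have h2 : cInner φp φp = ((∑ j, Complex.normSq (φp j) : ℝ) : ℂ) := by
      unfold cInner
      push_cast
      exact Finset.sum_congr rfl fun j _ => hstar _
    rw [h2] at hφp
    rw [h1]
    exact_mod_cast hφp
  have key : gammaSummand M φ φp ≤ ∑ i, B i := by
    unfold gammaSummand
    refine Finset.sum_le_sum fun i _ => ?_
    split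
    · exact hBnn i
    · rename_i hne
      have hAne : A i ≠ 0 := by
        intro h0
        apply hne
        rw [hA i, h0]
        norm_num
      have hApos : 0 < A i := lt_of_le_of_ne (hAnn i) (Ne.symm hAne)
      have hre : (cInner φ (M i *ᵥ φ)).re = A i := by rw [hA i]; simp
      have hre' : (cInner φ (M i *ᵥ φp)).re = ∑ j, m i j * (star (φ j) * φp j).re := by
        rw [hMdef i, cInner_diag, Complex.re_sum]
        refine Finset.sum_congr rfl fun j _ => ?_
        simp [Complex.mul_re]
      have hCS : ((cInner φ (M i *ᵥ φp)).re) ^ 2 ≤ A i * B i := by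
        rw [hre']
        have habs : |∑ j, m i j * (star (φ j) * φp j).re|
            ≤ ∑ j, (Real.sqrt (m i j) * ‖φ j‖)
                * (Real.sqrt (m i j) * ‖φp j‖) := by
          refine (Finset.abs_sum_le_sum_abs _ _).trans (Finset.sum_le_sum fun j _ => ?_)
          have h1 : |(star (φ j) * φp j).re| ≤ ‖φ j‖ * ‖φp j‖ := by
            refine (Complex.abs_re_le_norm _).trans ?_
            rw [norm_mul, Complex.star_def, Complex.norm_conj]
          have hm : Real.sqrt (m i j) * Real.sqrt (m i j) = m i j :=
            Real.mul_self_sqrt (hpos i j).le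
          rw [abs_mul, abs_of_pos (hpos i j)]
          calc m i j * |(star (φ j) * φp j).re|
              ≤ m i j * (‖φ j‖ * ‖φp j‖) := by
                exact mul_le_mul_of_nonneg_left h1 (hpos i j).le
            _ = (Real.sqrt (m i j) * ‖φ j‖)
                * (Real.sqrt (m i j) * ‖φp j‖) := by
                  linear_combination (-(‖φ j‖ * ‖φp j‖)) * hm
        calc (∑ j, m i j * (star (φ j) * φp j).re) ^ 2
            = |∑ j, m i j * (star (φ j) * φp j).re| ^ 2 := (sq_abs _).symm
          _ ≤ (∑ j, (Real.sqrt (m i j) * ‖φ j‖)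
                * (Real.sqrt (m i j) * ‖φp j‖)) ^ 2 := by
              refine pow_le_pow_left₀ (abs_nonneg _) habs 2
          _ ≤ (∑ j, (Real.sqrt (m i j) * ‖φ j‖) ^ 2)
              * ∑ j, (Real.sqrt (m i j) * ‖φp j‖) ^ 2 :=
              Finset.sum_mul_sq_le_sq_mul_sq _ _ _
          _ = A i * B i := by
              congr 1
              · refine Finset.sum_congr rfl fun j _ => ?_
                rw [mul_pow, Real.sq_sqrt (hpos i j).le, Complex.sq_norm]
              · refine Finset.sum_congr rfl fun j _ => ?_
                rw [mul_pow, Real.sq_sqrt (hpos i j).le, Complex.sq_norm]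
      rw [hre, div_le_iff₀ hApos]
      calc ((cInner φ (M i *ᵥ φp)).re) ^ 2 ≤ A i * B i := hCS
        _ = B i * A i := mul_comm _ _
  rw [hBsum] at key
  exact key

/-- The half-distance sum is attained by an explicit orthonormal pair. -/
lemma mem_gamma_set {d r : ℕ} (m : Fin r → Fin d → ℝ) (hpos : ∀ i j, 0 < m i j)
    (M : Fin r → Matrix (Fin d) (Fin d) ℂ)
    (hMdef : ∀ i, M i = Matrix.diagonal fun j => ((m i j : ℝ) : ℂ))
    (k l : Fin d) (hkl : k ≠ l) :
    ∃ φ φp : Fin d → ℂ, cInner φ φ = 1 ∧ cInner φp φp = 1 ∧ cInner φ φp = 0 ∧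
      (∑ i, (m i k - m i l) ^ 2 / (2 * (m i k + m i l))) = gammaSummand M φ φp := by
  set s : ℝ := (Real.sqrt 2)⁻¹ with hsdef
  have hs2 : s * s = 1 / 2 := by
    rw [hsdef, ← mul_inv, Real.mul_self_sqrt (by norm_num : (0:ℝ) ≤ 2)]
    norm_num
  set u : Fin d → ℝ := fun j => if j = k then 1 else if j = l then 1 else 0 with hu
  set v : Fin d → ℝ := fun j => if j = k then 1 else if j = l then -1 else 0 with hv
  have huk : u k = 1 := by simp [hu]
  have hul : u l = 1 := by simp [hu, hkl.symm]
  have hvk : v k = 1 := by simp [hv]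
  have hvl : v l = -1 := by simp [hv, hkl.symm]
  have huz : ∀ j, j ≠ k → j ≠ l → u j = 0 := by intro j h1 h2; simp [hu, h1, h2]
  have hvz : ∀ j, j ≠ k → j ≠ l → v j = 0 := by intro j h1 h2; simp [hv, h1, h2]
  have hgen : ∀ a b : Fin d → ℝ,
      cInner (fun j => ((s * a j : ℝ) : ℂ)) (fun j => ((s * b j : ℝ) : ℂ))
        = ((∑ j, (s * a j) * (s * b j) : ℝ) : ℂ) := by
    intro a b
    unfold cInner
    push_cast
    refine Finset.sum_congr rfl fun j _ => ?_
    simp only [Complex.star_def, map_mul, Complex.conj_ofReal]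
  have hgenM : ∀ (i : Fin r) (a b : Fin d → ℝ),
      cInner (fun j => ((s * a j : ℝ) : ℂ)) (M i *ᵥ fun j => ((s * b j : ℝ) : ℂ))
        = ((∑ j, m i j * ((s * a j) * (s * b j)) : ℝ) : ℂ) := by
    intro i a b
    rw [hMdef i, cInner_diag]
    push_cast
    refine Finset.sum_congr rfl fun j _ => ?_
    simp only [Complex.star_def, map_mul, Complex.conj_ofReal]
  refine ⟨fun j => ((s * u j : ℝ) : ℂ), fun j => ((s * v j : ℝ) : ℂ), ?_, ?_, ?_, ?_⟩
  · rw [hgen]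
    rw [sum_two hkl _ (fun j h1 h2 => by rw [huz j h1 h2]; ring)]
    rw [huk, hul]
    norm_num [hs2]
  · rw [hgen]
    rw [sum_two hkl _ (fun j h1 h2 => by rw [hvz j h1 h2]; ring)]
    rw [hvk, hvl]
    norm_num [hs2]
  · rw [hgen]
    rw [sum_two hkl _ (fun j h1 h2 => by rw [huz j h1 h2]; ring)]
    rw [huk, hul, hvk, hvl]
    norm_num
  · unfold gammaSummand
    refine Finset.sum_congr rfl fun i _ => ?_
    have hAi : cInner (fun j => ((s * u j : ℝ) : ℂ)) (M i *ᵥ fun j => ((s * u j : ℝ) : ℂ))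
        = (((m i k + m i l) / 2 : ℝ) : ℂ) := by
      rw [hgenM]
      congr 1
      rw [sum_two hkl _ (fun j h1 h2 => by rw [huz j h1 h2]; ring)]
      rw [huk, hul]
      linear_combination (m i k + m i l) * hs2
    have hRi : cInner (fun j => ((s * u j : ℝ) : ℂ)) (M i *ᵥ fun j => ((s * v j : ℝ) : ℂ))
        = (((m i k - m i l) / 2 : ℝ) : ℂ) := by
      rw [hgenM]
      congr 1
      rw [sum_two hkl _ (fun j h1 h2 => by rw [huz j h1 h2]; ring)]
      rw [huk, hul, hvk, hvl]
      linear_combination (m i k - m i l) * hs2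
    have hpos' : (0:ℝ) < (m i k + m i l) / 2 := by
      have := hpos i k; have := hpos i l; linarith
    rw [hAi, hRi]
    rw [if_neg (by exact_mod_cast hpos'.ne')]
    simp only [Complex.ofReal_re]
    have hne : m i k + m i l ≠ 0 := by linarith [hpos i k, hpos i l]
    field_simp

lemma pointwise_ineq (a b : ℝ) (ha : 0 < a) (hb : 0 < b) :
    (a + b) / 2 - Real.sqrt (a * b) ≤ (a - b) ^ 2 / (2 * (a + b)) := by
  rw [le_div_iff₀ (by positivity), Real.sqrt_mul ha.le]
  nlinarith [Real.sqrt_nonneg a, Real.sqrt_nonneg b, Real.sq_sqrt ha.le, Real.sq_sqrt hb.le,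
    mul_nonneg (mul_nonneg (Real.sqrt_nonneg a) (Real.sqrt_nonneg b))
      (sq_nonneg (Real.sqrt a - Real.sqrt b))]

/-- lower bounds on the normalized QPFI of a commuting-operator measurement:
for every pair `k ≠ l` the half-distance sum is a lower bound, which itself dominates one
minus the fidelity; in particular `γ(M) ≥ 1 − min_{k≠l} Σᵢ √(m_k⁽ⁱ⁾ m_l⁽ⁱ⁾)`. -/
theorem stmt12 {d r : ℕ} (hd : 2 ≤ d) (hr : 1 ≤ r)
    (m : Fin r → Fin d → ℝ) (hpos : ∀ i j, 0 < m i j) (hsum : ∀ j, ∑ i, m i j = 1)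
    (M : Fin r → Matrix (Fin d) (Fin d) ℂ)
    (hMdef : ∀ i, M i = Matrix.diagonal fun j => ((m i j : ℝ) : ℂ)) :
    (∀ k l : Fin d, k ≠ l →
      (∑ i, (m i k - m i l) ^ 2 / (2 * (m i k + m i l))) ≤ gammaPOVM M
      ∧ 1 - (∑ i, Real.sqrt (m i k * m i l))
          ≤ ∑ i, (m i k - m i l) ^ 2 / (2 * (m i k + m i l)))
    ∧ 1 - sInf {s : ℝ | ∃ k l : Fin d, k ≠ l ∧ s = ∑ i, Real.sqrt (m i k * m i l)}
        ≤ gammaPOVM M := by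
  have hbdd : BddAbove {x : ℝ | ∃ φ φp : Fin d → ℂ,
      cInner φ φ = 1 ∧ cInner φp φp = 1 ∧ cInner φ φp = 0 ∧ x = gammaSummand M φ φp} := by
    refine ⟨1, fun x hx => ?_⟩
    obtain ⟨φ, φp, _, hφp, _, rfl⟩ := hx
    exact gammaSummand_le_one m hpos hsum M hMdef φ φp hφp
  have hmain : ∀ k l : Fin d, k ≠ l →
      (∑ i, (m i k - m i l) ^ 2 / (2 * (m i k + m i l))) ≤ gammaPOVM M := by
    intro k l hkl
    obtain ⟨φ, φp, h1, h2, h3, h4⟩ := mem_gamma_set m hpos M hMdef k l hkl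
    exact le_csSup hbdd ⟨φ, φp, h1, h2, h3, h4⟩
  have hfid : ∀ k l : Fin d, k ≠ l →
      1 - (∑ i, Real.sqrt (m i k * m i l))
        ≤ ∑ i, (m i k - m i l) ^ 2 / (2 * (m i k + m i l)) := by
    intro k l hkl
    have hsum' : ∑ i, ((m i k + m i l) / 2 - Real.sqrt (m i k * m i l))
        = 1 - ∑ i, Real.sqrt (m i k * m i l) := by
      rw [Finset.sum_sub_distrib, ← Finset.sum_div, Finset.sum_add_distrib, hsum k, hsum l]
      norm_num
    rw [← hsum']
    exact Finset.sum_le_sum fun i _ => pointwise_ineq _ _ (hpos i k) (hpos i l)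
  refine ⟨fun k l hkl => ⟨hmain k l hkl, hfid k l hkl⟩, ?_⟩
  set S : Set ℝ := {s : ℝ | ∃ k l : Fin d, k ≠ l ∧ s = ∑ i, Real.sqrt (m i k * m i l)} with hS
  have hSfin : S.Finite := by
    have : S ⊆ (fun p : Fin d × Fin d => ∑ i, Real.sqrt (m i p.1 * m i p.2)) '' Set.univ := by
      rintro x ⟨k, l, _, rfl⟩
      exact ⟨(k, l), Set.mem_univ _, rfl⟩
    exact Set.Finite.subset ((Set.finite_univ).image _) this
  have hSne : S.Nonempty := by
    refine ⟨∑ i, Real.sqrt (m i ⟨0, by omega⟩ * m i ⟨1, by omega⟩), ⟨0, by omega⟩, ⟨1, by omega⟩,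
      ?_, rfl⟩
    simp [Fin.ext_iff]
  obtain ⟨k, l, hkl, heq⟩ := hSne.csInf_mem hSfin
  rw [heq]
  exact le_trans (hfid k l hkl) (hmain k l hkl)
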